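/- arXiv:2206.04378 — 2 statements merged into one kernel-verified Lean document; each statement's English description precedes it below -/
import Mathlib

section
/- For k ≥ 2, I(s) = e^{(s/2)(1-1/k)}, and the scaled Hermite polynomials H_m(y,s) = I(s)^{-m} h_m(I(s)y), the operator L_s q = I(s)^{-2} Δq − (1/(2k)) y q' + q satisfies L_s H_m(·,s) = (1 − m/(2k)) H_m(·,s) + m(m−1)(1 − 1/k) I(s)^{-2} H_{m-2}(·,s) for m ≥ 2, and L_s H_m(·,s) = (1 − m/(2k)) H_m(·,s) for m ∈ {0,1}. -/
open MeasureTheory Real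

/-- Physicists' Hermite polynomial `h_m(z) = ∑_{ℓ=0}^{[m/2]} m!/(ℓ!(m-2ℓ)!) (-1)^ℓ z^{m-2ℓ}`. -/
noncomputable def hPoly (m : ℕ) (z : ℝ) : ℝ :=
  ∑ ℓ ∈ Finset.range (m / 2 + 1),
    ((Nat.factorial m : ℝ) / ((Nat.factorial ℓ : ℝ) * (Nat.factorial (m - 2 * ℓ) : ℝ))) *
      (-1 : ℝ) ^ ℓ * z ^ (m - 2 * ℓ)

/-- `I(s) = e^{(s/2)(1-1/k)}`. -/
noncomputable def Ifun (k : ℕ) (s : ℝ) : ℝ := Real.exp (s / 2 * (1 - 1 / (k : ℝ)))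

/-- Scaled Hermite polynomial `H_m(y,s) = I(s)^{-m} h_m(I(s) y)`. -/
noncomputable def Hscaled (k : ℕ) (m : ℕ) (y s : ℝ) : ℝ :=
  (Ifun k s) ^ (-(m : ℤ)) * hPoly m (Ifun k s * y)

/-- Gaussian weight `ρ_s(y) = (I(s)/√(4π)) e^{-I(s)² y²/4}`. -/
noncomputable def rhoS (k : ℕ) (s y : ℝ) : ℝ :=
  Ifun k s / Real.sqrt (4 * Real.pi) * Real.exp (-(Ifun k s) ^ 2 * y ^ 2 / 4)

/-- Mehler-type kernel `K_{sσ}(y,z)` with `L = I(σ)/√(1-e^{-(s-σ)})`. -/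
noncomputable def mehlerK (k : ℕ) (s σ y z : ℝ) : ℝ :=
  Real.exp (s - σ) *
    (Ifun k σ / Real.sqrt (1 - Real.exp (-(s - σ))) / Real.sqrt (4 * Real.pi)) *
    Real.exp (-((Ifun k σ / Real.sqrt (1 - Real.exp (-(s - σ)))) ^ 2 *
      (Real.exp (-(s - σ) / (2 * (k : ℝ))) * y - z) ^ 2) / 4)

/-
Both `h_m` and its rescalings `H_m(·, s)` are Appell sequences: `h_m' = m h_{m-1}`. The Euler
operator `z ∂_z` multiplies the `ℓ`-th monomial of `h_m` by `m - 2ℓ`, and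
`ℓ c_{m,ℓ} = -m(m-1) c_{m-2,ℓ-1}`, so `z h_m' = m h_m + 2m(m-1) h_{m-2}`; after rescaling,
`y ∂_y H_m = m H_m + 2m(m-1) I⁻² H_{m-2}`. Together with `∂_y² H_m = m(m-1) H_{m-2}` this turns
`L_s H_m` into the stated combination of `H_m` and `H_{m-2}`.
-/

open Finset Nat

noncomputable def hermiteCoeff (m ℓ : ℕ) : ℝ :=
  (m ! : ℝ) / ((ℓ ! : ℝ) * ((m - 2 * ℓ) ! : ℝ)) * (-1) ^ ℓ

theorem hPoly_eq_sum (m : ℕ) (z : ℝ) :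
    hPoly m z = ∑ ℓ ∈ range (m / 2 + 1), hermiteCoeff m ℓ * z ^ (m - 2 * ℓ) := rfl

theorem hermiteCoeff_succ_mul {n ℓ : ℕ} (h : 2 * ℓ ≤ n) :
    hermiteCoeff (n + 1) ℓ * ((n + 1 - 2 * ℓ : ℕ) : ℝ) = (n + 1) * hermiteCoeff n ℓ := by
  obtain ⟨j, rfl⟩ := Nat.exists_eq_add_of_le h
  have hj : 2 * ℓ + j + 1 - 2 * ℓ = j + 1 := by omega
  simp only [hermiteCoeff, hj, Nat.add_sub_cancel_left, Nat.factorial_succ]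
  push_cast
  field_simp

theorem succ_mul_hermiteCoeff_add_two_succ (n ℓ : ℕ) :
    (ℓ + 1) * hermiteCoeff (n + 2) (ℓ + 1) = -((n + 2) * (n + 1)) * hermiteCoeff n ℓ := by
  have h : n + 2 - 2 * (ℓ + 1) = n - 2 * ℓ := by omega
  simp only [hermiteCoeff, h, Nat.factorial_succ]
  push_cast
  field_simp
  ring

theorem hasDerivAt_hPoly_termwise (m : ℕ) (z : ℝ) :
    HasDerivAt (hPoly m)
      (∑ ℓ ∈ range (m / 2 + 1), hermiteCoeff m ℓ * ((m - 2 * ℓ : ℕ) : ℝ) * z ^ (m - 2 * ℓ - 1)) z := by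
  refine HasDerivAt.fun_sum (u := range (m / 2 + 1))
    (A := fun ℓ z => hermiteCoeff m ℓ * z ^ (m - 2 * ℓ)) fun ℓ _ => ?_
  exact ((hasDerivAt_pow (m - 2 * ℓ) z).const_mul (hermiteCoeff m ℓ)).congr_deriv (by ring)

theorem sum_hermiteCoeff_mul_pow_pred (m : ℕ) (z : ℝ) :
    ∑ ℓ ∈ range (m / 2 + 1), hermiteCoeff m ℓ * ((m - 2 * ℓ : ℕ) : ℝ) * z ^ (m - 2 * ℓ - 1)
      = m * hPoly (m - 1) z := by
  rcases m with _ | n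
  · simp
  rw [Nat.add_sub_cancel, hPoly_eq_sum n z, mul_sum]
  rw [← sum_subset (range_subset_range.2 (by omega : n / 2 + 1 ≤ (n + 1) / 2 + 1))
    fun ℓ hℓ hℓn => ?_]
  · refine sum_congr rfl fun ℓ hℓ => ?_
    have h : 2 * ℓ ≤ n := by simp only [mem_range] at hℓ; omega
    rw [hermiteCoeff_succ_mul h, show n + 1 - 2 * ℓ - 1 = n - 2 * ℓ by omega]
    push_cast
    ring
  · have : n + 1 - 2 * ℓ = 0 := by simp only [mem_range] at hℓ hℓn; omega
    simp [this]

theorem hasDerivAt_hPoly (m : ℕ) (z : ℝ) : HasDerivAt (hPoly m) (m * hPoly (m - 1) z) z :=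
  sum_hermiteCoeff_mul_pow_pred m z ▸ hasDerivAt_hPoly_termwise m z

theorem sum_mul_hermiteCoeff (m : ℕ) (z : ℝ) :
    ∑ ℓ ∈ range (m / 2 + 1), (ℓ : ℝ) * hermiteCoeff m ℓ * z ^ (m - 2 * ℓ)
      = -(m * (m - 1)) * hPoly (m - 2) z := by
  rcases m with _ | _ | n
  · simp
  · simp
  rw [sum_range_succ', show (n + 2) / 2 = n / 2 + 1 by omega, hPoly_eq_sum, mul_sum]
  simp only [CharP.cast_eq_zero, zero_mul, add_zero]
  refine sum_congr rfl fun ℓ _ => ?_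
  rw [show n + 2 - 2 * (ℓ + 1) = n - 2 * ℓ by omega]
  push_cast
  linear_combination z ^ (n - 2 * ℓ) * succ_mul_hermiteCoeff_add_two_succ n ℓ

theorem mul_hPoly_pred (m : ℕ) (z : ℝ) :
    z * (m * hPoly (m - 1) z) = m * hPoly m z + 2 * m * (m - 1) * hPoly (m - 2) z := by
  have euler : ∀ ℓ ∈ range (m / 2 + 1),
      z * (hermiteCoeff m ℓ * ((m - 2 * ℓ : ℕ) : ℝ) * z ^ (m - 2 * ℓ - 1))
        = m * (hermiteCoeff m ℓ * z ^ (m - 2 * ℓ))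
          - 2 * ((ℓ : ℝ) * hermiteCoeff m ℓ * z ^ (m - 2 * ℓ)) := by
    intro ℓ hℓ
    have h : 2 * ℓ ≤ m := by simp only [mem_range] at hℓ; omega
    have hm : (m : ℝ) = ((m - 2 * ℓ : ℕ) : ℝ) + 2 * ℓ := by rw [Nat.cast_sub h]; push_cast; ring
    rw [hm]
    rcases m - 2 * ℓ with _ | j
    · simp only [CharP.cast_eq_zero, mul_zero, zero_tsub, pow_zero, mul_one, zero_add]
      ring
    · rw [Nat.add_sub_cancel, pow_succ]
      push_cast
      ring
  rw [← sum_hermiteCoeff_mul_pow_pred, mul_sum, sum_congr rfl euler, sum_sub_distrib, ← mul_sum,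
    ← mul_sum, sum_mul_hermiteCoeff, ← hPoly_eq_sum]
  ring

theorem natCast_mul_zpow_neg_pred {K : Type*} [Field K] {a : K} (ha : a ≠ 0) (m : ℕ) :
    (m : K) * a ^ (-((m - 1 : ℕ) : ℤ)) = m * (a ^ (-(m : ℤ)) * a) := by
  rcases m with _ | m
  · simp
  · rw [Nat.add_sub_cancel, show -((m + 1 : ℕ) : ℤ) = -(m : ℤ) - 1 by push_cast; ring,
      zpow_sub_one₀ ha, inv_mul_cancel_right₀ ha]

theorem natCast_mul_pred_mul_zpow_neg_sub_two {K : Type*} [Field K] {a : K} (ha : a ≠ 0) (m : ℕ) :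
    (m : K) * (m - 1) * (a ^ (-2 : ℤ) * a ^ (-((m - 2 : ℕ) : ℤ)))
      = m * (m - 1) * a ^ (-(m : ℤ)) := by
  rcases m with _ | _ | m
  · simp
  · simp
  · rw [← zpow_add₀ ha, show m + 1 + 1 - 2 = m from rfl]
    push_cast
    ring_nf

theorem Ifun_ne_zero (k : ℕ) (s : ℝ) : Ifun k s ≠ 0 := (Real.exp_pos _).ne'

theorem hasDerivAt_Hscaled (k m : ℕ) (s y : ℝ) :
    HasDerivAt (fun x => Hscaled k m x s) (m * Hscaled k (m - 1) y s) y := by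
  refine (((hasDerivAt_hPoly m (Ifun k s * y)).comp y
    ((hasDerivAt_id y).const_mul (Ifun k s))).const_mul (Ifun k s ^ (-(m : ℤ)))).congr_deriv ?_
  rw [Hscaled, mul_one, ← mul_assoc (m : ℝ), natCast_mul_zpow_neg_pred (Ifun_ne_zero k s)]
  ring

theorem deriv_Hscaled (k m : ℕ) (s : ℝ) :
    deriv (fun x => Hscaled k m x s) = fun y => m * Hscaled k (m - 1) y s :=
  funext fun y => (hasDerivAt_Hscaled k m s y).deriv

theorem deriv_deriv_Hscaled (k m : ℕ) (s y : ℝ) :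
    deriv (deriv (fun x => Hscaled k m x s)) y = m * (m - 1) * Hscaled k (m - 2) y s := by
  rw [deriv_Hscaled, ((hasDerivAt_Hscaled k (m - 1) s y).const_mul (m : ℝ)).deriv]
  rcases m with _ | m
  · simp
  · push_cast
    simp only [add_sub_cancel_right]
    ring

theorem mul_Hscaled_pred (k m : ℕ) (s y : ℝ) :
    y * (m * Hscaled k (m - 1) y s)
      = m * Hscaled k m y s + 2 * m * (m - 1) * Ifun k s ^ (-2 : ℤ) * Hscaled k (m - 2) y s := by
  set I := Ifun k s
  have hI : I ≠ 0 := Ifun_ne_zero k s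
  calc y * (m * Hscaled k (m - 1) y s)
        = I ^ (-(m : ℤ)) * (I * y * (m * hPoly (m - 1) (I * y))) := by
        rw [Hscaled, ← mul_assoc (m : ℝ), natCast_mul_zpow_neg_pred hI]
        ring
    _ = I ^ (-(m : ℤ)) * (m * hPoly m (I * y) + 2 * m * (m - 1) * hPoly (m - 2) (I * y)) := by
        rw [mul_hPoly_pred]
    _ = _ := by
        simp only [Hscaled]
        linear_combination (-2 * hPoly (m - 2) (I * y)) * natCast_mul_pred_mul_zpow_neg_sub_two hI m

-- For `m ≤ 1` the index `m - 2` is truncated, but its coefficient `m (m - 1)` vanishes.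
theorem Ls_Hscaled (k m : ℕ) (s y : ℝ) :
    (Ifun k s) ^ (-2 : ℤ) * deriv (deriv (fun x => Hscaled k m x s)) y
        - y / (2 * (k : ℝ)) * deriv (fun x => Hscaled k m x s) y + Hscaled k m y s
      = (1 - (m : ℝ) / (2 * (k : ℝ))) * Hscaled k m y s
        + (m : ℝ) * ((m : ℝ) - 1) * (1 - 1 / (k : ℝ)) * (Ifun k s) ^ (-2 : ℤ)
          * Hscaled k (m - 2) y s := by
  rw [deriv_deriv_Hscaled, deriv_Hscaled]
  linear_combination (-(1 / (2 * (k : ℝ)))) * mul_Hscaled_pred k m s y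

theorem Ls_on_Hscaled_general (k : ℕ) (s : ℝ) (m : ℕ) (y : ℝ) :
    (2 ≤ m →
      (Ifun k s) ^ (-2 : ℤ) * deriv (deriv (fun x => Hscaled k m x s)) y
          - y / (2 * (k : ℝ)) * deriv (fun x => Hscaled k m x s) y + Hscaled k m y s
        = (1 - (m : ℝ) / (2 * (k : ℝ))) * Hscaled k m y s
          + (m : ℝ) * ((m : ℝ) - 1) * (1 - 1 / (k : ℝ)) * (Ifun k s) ^ (-2 : ℤ)
            * Hscaled k (m - 2) y s)
    ∧ (m ≤ 1 →
      (Ifun k s) ^ (-2 : ℤ) * deriv (deriv (fun x => Hscaled k m x s)) y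
          - y / (2 * (k : ℝ)) * deriv (fun x => Hscaled k m x s) y + Hscaled k m y s
        = (1 - (m : ℝ) / (2 * (k : ℝ))) * Hscaled k m y s) := by
  refine ⟨fun _ => Ls_Hscaled k m s y, fun hm => ?_⟩
  have hm0 : (m : ℝ) * ((m : ℝ) - 1) = 0 := by interval_cases m <;> norm_num
  rw [Ls_Hscaled, hm0]
  ring

theorem Ls_on_Hscaled (k : ℕ) (hk : 2 ≤ k) (s : ℝ) (m : ℕ) (y : ℝ) :
    (2 ≤ m →
      (Ifun k s) ^ (-2 : ℤ) * deriv (deriv (fun x => Hscaled k m x s)) y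
          - y / (2 * (k : ℝ)) * deriv (fun x => Hscaled k m x s) y + Hscaled k m y s
        = (1 - (m : ℝ) / (2 * (k : ℝ))) * Hscaled k m y s
          + (m : ℝ) * ((m : ℝ) - 1) * (1 - 1 / (k : ℝ)) * (Ifun k s) ^ (-2 : ℤ)
            * Hscaled k (m - 2) y s)
    ∧ (m ≤ 1 →
      (Ifun k s) ^ (-2 : ℤ) * deriv (deriv (fun x => Hscaled k m x s)) y
          - y / (2 * (k : ℝ)) * deriv (fun x => Hscaled k m x s) y + Hscaled k m y s
        = (1 - (m : ℝ) / (2 * (k : ℝ))) * Hscaled k m y s) :=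
  Ls_on_Hscaled_general k s m y
end

section
/- Let K > 0, m ∈ ℕ, and let f : ℝ → ℝ satisfy |f(y)| ≤ C_f (1 + |y|^K) for all y. Then there exist constants C (depending on m, K, C_f) and s₀ such that for all s ≥ s₀, |∫_{|y| ≥ 1} f(y) H_m(y,s) ρ_s(y) dy| ≤ C e^{-I(s)/8}, where ρ_s(y) = (I(s)/√(4π)) e^{-I(s)² y²/4}, H_m(y,s) = I(s)^{-m} h_m(I(s)y), and I(s) = e^{(s/2)(1-1/k)} with k ≥ 2. -/
open MeasureTheory Real

/-
Once `I = I(s) ≥ 9`, on `|y| ≥ 1` one has `I² y²/4 ≥ I²/8 + y²/8` and `I e^{-I²/8} ≤ e^{-I/8}`, so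
`ρ_s(y) ≤ e^{-I/8} e^{-y²/8}/√(4π)`. Meanwhile `f` and `H_m(·, s)` grow at most like `e^{a|y|}`
uniformly in `s`: since `I|y| ≥ 1`, every monomial of `h_m(I y)` is at most `(I|y|)^m` in absolute
value, and the factor `I^{-m}` cancels the scaling. Completing the square, `e^{a|y| - y²/8} ≤ e^{4a²} e^{-y²/16}`, which is integrable.
-/

lemma rpow_le_exp_abs_mul {x : ℝ} (hx : 1 ≤ x) (K : ℝ) : x ^ K ≤ exp (|K| * x) :=
  calc x ^ K ≤ x ^ |K| := rpow_le_rpow_of_exponent_le hx (le_abs_self K)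
    _ ≤ exp x ^ |K| := rpow_le_rpow (by linarith) (by linarith [add_one_le_exp x]) (abs_nonneg K)
    _ = exp (|K| * x) := by rw [mul_comm, exp_mul]

lemma exp_mul_sub_sq_div_eight_le (a t : ℝ) :
    exp (a * t - t ^ 2 / 8) ≤ exp (4 * a ^ 2) * exp (-(1 / 16) * t ^ 2) := by
  rw [← exp_add]
  exact exp_le_exp.mpr (by nlinarith [sq_nonneg (2 * a - t / 4)])

lemma norm_setIntegral_le_mul_integral {α E : Type*} [MeasurableSpace α] [NormedAddCommGroup E]
    [NormedSpace ℝ E] {μ : Measure α} {s : Set α} (hs : MeasurableSet s) {F : α → E}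
    {g : α → ℝ} (hg : Integrable g μ) (hg0 : 0 ≤ g) {c : ℝ} (hc : 0 ≤ c)
    (hF : ∀ x ∈ s, ‖F x‖ ≤ c * g x) :
    ‖∫ x in s, F x ∂μ‖ ≤ c * ∫ x, g x ∂μ :=
  calc ‖∫ x in s, F x ∂μ‖ ≤ ∫ x in s, c * g x ∂μ :=
        norm_integral_le_of_norm_le (hg.integrableOn.const_mul c) (ae_restrict_of_forall_mem hs hF)
    _ ≤ ∫ x, c * g x ∂μ :=
        setIntegral_le_integral (hg.const_mul c) (ae_of_all _ fun x => mul_nonneg hc (hg0 x))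
    _ = c * ∫ x, g x ∂μ := integral_const_mul c g

lemma one_add_div_four_le_Ifun {k : ℕ} (hk : 2 ≤ k) {s : ℝ} (hs : 0 ≤ s) :
    1 + s / 4 ≤ Ifun k s := by
  have hk' : 1 / (k : ℝ) ≤ 1 / 2 := one_div_le_one_div_of_le two_pos (by exact_mod_cast hk)
  calc 1 + s / 4 ≤ exp (s / 4) := by linarith [add_one_le_exp (s / 4)]
    _ ≤ Ifun k s := exp_le_exp.mpr (by nlinarith)

noncomputable def hermiteAbsCoeffSum (m : ℕ) : ℝ :=
  ∑ ℓ ∈ Finset.range (m / 2 + 1),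
    (Nat.factorial m : ℝ) / ((Nat.factorial ℓ : ℝ) * (Nat.factorial (m - 2 * ℓ) : ℝ))

lemma hermiteAbsCoeffSum_nonneg (m : ℕ) : 0 ≤ hermiteAbsCoeffSum m :=
  Finset.sum_nonneg fun _ _ => by positivity

lemma abs_hPoly_le {z : ℝ} (hz : 1 ≤ |z|) (m : ℕ) :
    |hPoly m z| ≤ hermiteAbsCoeffSum m * |z| ^ m := by
  rw [hPoly, hermiteAbsCoeffSum, Finset.sum_mul]
  refine (Finset.abs_sum_le_sum_abs _ _).trans (Finset.sum_le_sum fun ℓ _ => ?_)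
  rw [abs_mul, abs_mul, abs_pow, abs_neg, abs_one, one_pow, mul_one,
    abs_of_nonneg (by positivity), abs_pow]
  exact mul_le_mul_of_nonneg_left (pow_le_pow_right₀ hz (Nat.sub_le m (2 * ℓ))) (by positivity)

lemma abs_Hscaled_le {k m : ℕ} {y s : ℝ} (hy : 1 ≤ Ifun k s * |y|) :
    |Hscaled k m y s| ≤ hermiteAbsCoeffSum m * |y| ^ m := by
  have hI : 0 < Ifun k s := exp_pos _
  have hIy : 1 ≤ |Ifun k s * y| := by rwa [abs_mul, abs_of_pos hI]
  calc |Hscaled k m y s| = (Ifun k s ^ m)⁻¹ * |hPoly m (Ifun k s * y)| := by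
        rw [Hscaled, abs_mul, zpow_neg, zpow_natCast, abs_inv, abs_of_pos (pow_pos hI m)]
    _ ≤ (Ifun k s ^ m)⁻¹ * (hermiteAbsCoeffSum m * |Ifun k s * y| ^ m) :=
        mul_le_mul_of_nonneg_left (abs_hPoly_le hIy m) (by positivity)
    _ = hermiteAbsCoeffSum m * |y| ^ m := by
        rw [abs_mul, abs_of_pos hI, mul_pow]
        field_simp

lemma rhoS_nonneg (k : ℕ) (s y : ℝ) : 0 ≤ rhoS k s y := by
  unfold rhoS Ifun
  positivity

lemma mul_exp_neg_sq_mul_sq_div_four_le {I y : ℝ} (hI : 9 ≤ I) (hy : 1 ≤ y ^ 2) :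
    I * exp (-I ^ 2 * y ^ 2 / 4) ≤ exp (-I / 8) * exp (-y ^ 2 / 8) := by
  have hI2 : 1 ≤ I ^ 2 := by nlinarith
  calc I * exp (-I ^ 2 * y ^ 2 / 4) ≤ exp I * exp (-I ^ 2 * y ^ 2 / 4) := by
        gcongr; linarith [add_one_le_exp I]
    _ ≤ exp (-I / 8) * exp (-y ^ 2 / 8) := by
        rw [← exp_add, ← exp_add]
        apply exp_le_exp.mpr
        nlinarith [mul_nonneg (sq_nonneg I) (sub_nonneg.2 hy),
          mul_nonneg (sub_nonneg.2 hI2) (sq_nonneg y)]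

lemma rhoS_le {k : ℕ} {s y : ℝ} (hI : 9 ≤ Ifun k s) (hy : 1 ≤ |y|) :
    rhoS k s y ≤ exp (-Ifun k s / 8) / √(4 * π) * exp (-y ^ 2 / 8) := by
  have hy2 : 1 ≤ y ^ 2 := by nlinarith [sq_abs y]
  calc rhoS k s y = Ifun k s * exp (-Ifun k s ^ 2 * y ^ 2 / 4) / √(4 * π) := by rw [rhoS]; ring
    _ ≤ exp (-Ifun k s / 8) * exp (-y ^ 2 / 8) / √(4 * π) :=
        div_le_div_of_nonneg_right (mul_exp_neg_sq_mul_sq_div_four_le hI hy2) (sqrt_nonneg _)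
    _ = exp (-Ifun k s / 8) / √(4 * π) * exp (-y ^ 2 / 8) := by ring

lemma abs_mul_Hscaled_mul_rhoS_le {k m : ℕ} {K Cf s y a : ℝ} (ha : |a| ≤ Cf * (1 + |y| ^ K))
    (hI : 9 ≤ Ifun k s) (hy : 1 ≤ |y|) :
    |a * Hscaled k m y s * rhoS k s y| ≤
      2 * |Cf| * hermiteAbsCoeffSum m / √(4 * π) * exp (4 * (|K| + m) ^ 2) *
        exp (-Ifun k s / 8) * exp (-(1 / 16) * y ^ 2) := by
  have hC := hermiteAbsCoeffSum_nonneg m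
  have ha' : |a| ≤ |Cf| * (2 * exp (|K| * |y|)) := by
    have h1 := rpow_le_exp_abs_mul hy K
    have h2 : 1 ≤ exp (|K| * |y|) := one_le_exp (by positivity)
    calc |a| ≤ Cf * (1 + |y| ^ K) := ha
      _ ≤ |Cf| * (1 + |y| ^ K) :=
          mul_le_mul_of_nonneg_right (le_abs_self Cf) (by positivity)
      _ ≤ |Cf| * (2 * exp (|K| * |y|)) := by gcongr; linarith
  have hH : |Hscaled k m y s| ≤ hermiteAbsCoeffSum m * exp (m * |y|) := by
    have h := rpow_le_exp_abs_mul hy m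
    rw [rpow_natCast, Nat.abs_cast] at h
    exact (abs_Hscaled_le (by nlinarith)).trans (by gcongr)
  rw [abs_mul, abs_mul, abs_of_nonneg (rhoS_nonneg k s y)]
  calc |a| * |Hscaled k m y s| * rhoS k s y
      ≤ |Cf| * (2 * exp (|K| * |y|)) * (hermiteAbsCoeffSum m * exp (m * |y|)) *
          (exp (-Ifun k s / 8) / √(4 * π) * exp (-y ^ 2 / 8)) := by
        gcongr
        exacts [rhoS_nonneg k s y, rhoS_le hI hy]
    _ = 2 * |Cf| * hermiteAbsCoeffSum m / √(4 * π) * exp (-Ifun k s / 8) *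
          exp ((|K| + m) * |y| - |y| ^ 2 / 8) := by
        have hexp : (|K| + m) * |y| - |y| ^ 2 / 8 = |K| * |y| + m * |y| + -y ^ 2 / 8 := by
          rw [sq_abs]; ring
        rw [hexp, exp_add, exp_add]
        ring
    _ ≤ 2 * |Cf| * hermiteAbsCoeffSum m / √(4 * π) * exp (-Ifun k s / 8) *
          (exp (4 * (|K| + m) ^ 2) * exp (-(1 / 16) * |y| ^ 2)) := by
        gcongr
        exact exp_mul_sub_sq_div_eight_le _ _
    _ = _ := by rw [sq_abs]; ring

theorem outer_integral_exponentially_small_general (k : ℕ) (hk : 2 ≤ k) (m : ℕ) (K : ℝ)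
    (f : ℝ → ℝ) (Cf : ℝ) (hf : ∀ y : ℝ, |f y| ≤ Cf * (1 + |y| ^ K)) :
    ∃ C s₀ : ℝ, ∀ s : ℝ, s₀ ≤ s →
      |∫ y in {y : ℝ | 1 ≤ |y|}, f y * Hscaled k m y s * rhoS k s y|
        ≤ C * Real.exp (-Ifun k s / 8) := by
  set B := 2 * |Cf| * hermiteAbsCoeffSum m / √(4 * π) * exp (4 * (|K| + m) ^ 2)
  have hB : 0 ≤ B := by have := hermiteAbsCoeffSum_nonneg m; positivity
  refine ⟨B * √(π / (1 / 16)), 32, fun s hs => ?_⟩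
  have hI : 9 ≤ Ifun k s := by linarith [one_add_div_four_le_Ifun hk (by linarith : (0 : ℝ) ≤ s)]
  have hS : MeasurableSet {y : ℝ | 1 ≤ |y|} := measurableSet_le measurable_const measurable_abs
  rw [← Real.norm_eq_abs]
  calc _ ≤ B * exp (-Ifun k s / 8) * ∫ y, exp (-(1 / 16) * y ^ 2) :=
        norm_setIntegral_le_mul_integral hS (integrable_exp_neg_mul_sq (by norm_num))
          (fun _ => (exp_pos _).le) (by positivity)
          fun y hy => abs_mul_Hscaled_mul_rhoS_le (hf y) hI hy
    _ = B * √(π / (1 / 16)) * exp (-Ifun k s / 8) := by rw [integral_gaussian]; ring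

theorem outer_integral_exponentially_small (k : ℕ) (hk : 2 ≤ k) (m : ℕ) (K : ℝ) (hK : 0 < K)
    (f : ℝ → ℝ) (Cf : ℝ) (hf : ∀ y : ℝ, |f y| ≤ Cf * (1 + |y| ^ K)) :
    ∃ C s₀ : ℝ, ∀ s : ℝ, s₀ ≤ s →
      |∫ y in {y : ℝ | 1 ≤ |y|}, f y * Hscaled k m y s * rhoS k s y|
        ≤ C * Real.exp (-Ifun k s / 8) :=
  outer_integral_exponentially_small_general k hk m K f Cf hf
end
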